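/- arXiv:2205.13464 — 6 statements merged into one kernel-verified Lean document; each statement's English description precedes it below -/
import Mathlib

section
/- Let N be a finite group and G a transitive subgroup of Hol(N). For a subgroup M of N, the following three conditions are equivalent: (i) M is G-admissible (i.e. M_* = {g ∈ G : α_g ∈ M} is a subgroup of G); (ii) g · m ∈ M for all g ∈ M_* and all m ∈ M; (iii) θ_g(m) ∈ M for all g ∈ M_* and all m ∈ M. -/
/-- The holomorph of a group `N`: the semidirect product `N ⋊ Aut N`. -/
abbrev Hol (N : Type*) [Group N] : Type _ :=
  SemidirectProduct N (MulAut N) (MonoidHom.id (MulAut N))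

/-- `Hol N` acts on `N` by `(α, θ) • η = α * θ η`. -/
instance holMulAction {N : Type*} [Group N] : MulAction (Hol N) N where
  smul g η := g.left * g.right η
  one_smul η := by
    show (1 : Hol N).left * (1 : Hol N).right η = η
    simp
  mul_smul g h η := by
    show (g * h).left * (g * h).right η = g.left * g.right (h.left * h.right η)
    simp [SemidirectProduct.mul_left, SemidirectProduct.mul_right, mul_assoc]

theorem holSmul_def {N : Type*} [Group N] (g : Hol N) (η : N) :
    g • η = g.left * g.right η := rfl

/-- Proposition 2.2: for a transitive subgroup `G ≤ Hol N` and a subgroup `M ≤ N`,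
the following are equivalent: (i) `M` is `G`-admissible, i.e. the set
`M_* = {g ∈ G | α_g ∈ M}` is (the carrier of) a subgroup of `G`;
(ii) `g • m ∈ M` for all `g ∈ M_*`, `m ∈ M`; (iii) `θ_g m ∈ M` for all `g ∈ M_*`, `m ∈ M`. -/
theorem stmt_0 {N : Type*} [Group N] [Finite N] (G : Subgroup (Hol N))
    (hG : ∀ η μ : N, ∃ g ∈ G, g • η = μ) (M : Subgroup N) :
    List.TFAE
      [ ∃ H : Subgroup (Hol N), (H : Set (Hol N)) = {g | g ∈ G ∧ g.left ∈ M},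
        ∀ g ∈ G, g.left ∈ M → ∀ m ∈ M, g • m ∈ M,
        ∀ g ∈ G, g.left ∈ M → ∀ m ∈ M, g.right m ∈ M ] := by
  tfae_have 2 ↔ 3 := by
    constructor
    · intro h g hg hgl m hm
      have := h g hg hgl m hm
      rw [holSmul_def] at this
      simpa using M.mul_mem (M.inv_mem hgl) this
    · intro h g hg hgl m hm
      rw [holSmul_def]
      exact M.mul_mem hgl (h g hg hgl m hm)
  tfae_have 3 → 1 := by
    intro h3
    -- θ_g restricted to M is a bijection of M by finiteness
    have surj : ∀ g ∈ G, g.left ∈ M → ∀ m ∈ M, ∃ n ∈ M, g.right n = m := by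
      intro g hg hgl m hm
      have hinj : Function.Injective
          (fun x : M => (⟨g.right x, h3 g hg hgl x x.2⟩ : M)) := by
        intro a b hab
        have : (g.right : N → N) a = g.right b := congrArg Subtype.val hab
        exact Subtype.ext ((g.right : MulAut N).injective this)
      obtain ⟨⟨n, hn⟩, hn2⟩ := (Finite.injective_iff_surjective.mp hinj) ⟨m, hm⟩
      exact ⟨n, hn, congrArg Subtype.val hn2⟩
    refine ⟨{ carrier := {g | g ∈ G ∧ g.left ∈ M}
              one_mem' := ⟨G.one_mem, by simpa using M.one_mem⟩
              mul_mem' := ?_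
              inv_mem' := ?_ }, rfl⟩
    · rintro g h ⟨hg, hgl⟩ ⟨hh, hhl⟩
      refine ⟨G.mul_mem hg hh, ?_⟩
      rw [SemidirectProduct.mul_left]
      exact M.mul_mem hgl (h3 g hg hgl h.left hhl)
    · rintro g ⟨hg, hgl⟩
      refine ⟨G.inv_mem hg, ?_⟩
      obtain ⟨n, hn, hgn⟩ := surj g hg hgl g.left⁻¹ (M.inv_mem hgl)
      have : g⁻¹.left = n := by
        rw [SemidirectProduct.inv_left]
        have : (g.right⁻¹ : MulAut N) (g.right n) = n := by
          simp
        rw [← hgn] at *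
        simp_all
      rw [this]; exact hn
  tfae_have 1 → 3 := by
    rintro ⟨H, hH⟩ g hg hgl m hm
    obtain ⟨k, hk, hkm⟩ := hG 1 m
    rw [holSmul_def] at hkm
    simp only [map_one, mul_one] at hkm
    have hkH : k ∈ H := by rw [← SetLike.mem_coe, hH]; exact ⟨hk, hkm ▸ hm⟩
    have hgH : g ∈ H := by rw [← SetLike.mem_coe, hH]; exact ⟨hg, hgl⟩
    have hmul : g * k ∈ H := H.mul_mem hgH hkH
    rw [← SetLike.mem_coe, hH] at hmul
    have := hmul.2
    rw [SemidirectProduct.mul_left, hkm] at this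
    simpa using M.mul_mem (M.inv_mem hgl) this
  tfae_finish
end

section
/- Let N be a finite group, G a transitive subgroup of Hol(N), M a G-admissible subgroup of N, and H = M_*. Then the action of G on N restricts to an action of H on M (each h ∈ H maps M to M, and θ_h restricts to an automorphism of M), and H is transitive on M; in particular, if G is a regular subgroup of Hol(N) then H is (identified with) a regular subgroup of Hol(M). Conversely, if G is a regular subgroup of Hol(N) and H is a subgroup of G acting regularly on some subgroup M of N, then M is G-admissible and H = M_*. -/
/-- Lemma 2.4: if `M` is a `G`-admissible subgroup of `N` and `H = M_*`, then the
action of `G` on `N` restricts to an action of `H` on `M` (each `h ∈ H` maps `M` into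
`M` and `θ_h` restricts to an automorphism of `M`), `H` is transitive on `M`, and if
`G` is regular on `N` then `H` is regular on `M`.  Conversely, if `G` is regular and a
subgroup `H ≤ G` acts regularly on a subgroup `M` of `N`, then `M` is `G`-admissible
with `H = M_*`. -/
theorem stmt_1 {N : Type*} [Group N] [Finite N] (G : Subgroup (Hol N))
    (hG : ∀ η μ : N, ∃ g ∈ G, g • η = μ) (M : Subgroup N) :
    ((∃ H : Subgroup (Hol N), (H : Set (Hol N)) = {g | g ∈ G ∧ g.left ∈ M}) →
      ((∀ g ∈ G, g.left ∈ M → ∀ m ∈ M, g • m ∈ M) ∧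
       (∀ g ∈ G, g.left ∈ M → ∀ m ∈ M, g.right m ∈ M) ∧
       (∀ m ∈ M, ∀ μ ∈ M, ∃ g, (g ∈ G ∧ g.left ∈ M) ∧ g • m = μ) ∧
       ((∀ η μ : N, ∃! g, g ∈ G ∧ g • η = μ) →
         ∀ m ∈ M, ∀ μ ∈ M, ∃! g, (g ∈ G ∧ g.left ∈ M) ∧ g • m = μ))) ∧
    ((∀ η μ : N, ∃! g, g ∈ G ∧ g • η = μ) →
      ∀ H : Subgroup (Hol N), H ≤ G →
        (∀ h ∈ H, ∀ m ∈ M, h • (m : N) ∈ M) →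
        (∀ m ∈ M, ∀ μ ∈ M, ∃! h, h ∈ H ∧ h • m = μ) →
        (H : Set (Hol N)) = {g | g ∈ G ∧ g.left ∈ M}) := by

  have hsmul1 : ∀ g : Hol N, g • (1:N) = g.left := by
    intro g; rw [holSmul_def, map_one, mul_one]
  constructor
  · rintro ⟨H, hH⟩
    have hmem : ∀ g : Hol N, g ∈ H ↔ g ∈ G ∧ g.left ∈ M := fun g =>
      Set.ext_iff.mp hH g
    have hright : ∀ g ∈ G, g.left ∈ M → ∀ m ∈ M, g.right m ∈ M := by
      intro g hg hgl m hm
      obtain ⟨k, hk, hk1⟩ := hG 1 m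
      have hkl : k.left = m := by rw [← hsmul1 k, hk1]
      have hkH : k ∈ H := (hmem k).2 ⟨hk, by rw [hkl]; exact hm⟩
      have hgH : g ∈ H := (hmem g).2 ⟨hg, hgl⟩
      have hmul := ((hmem (g * k)).1 (H.mul_mem hgH hkH)).2
      have hleft : (g * k).left = g.left * g.right m := by
        simp [SemidirectProduct.mul_left, hkl]
      rw [hleft] at hmul
      exact (mul_mem_cancel_left hgl).mp hmul
    have hact : ∀ g ∈ G, g.left ∈ M → ∀ m ∈ M, g • m ∈ M := by
      intro g hg hgl m hm
      rw [holSmul_def]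
      exact M.mul_mem hgl (hright g hg hgl m hm)
    have htrans : ∀ m ∈ M, ∀ μ ∈ M, ∃ g, (g ∈ G ∧ g.left ∈ M) ∧ g • m = μ := by
      intro m hm μ hμ
      obtain ⟨g2, hg2, hg21⟩ := hG 1 m
      obtain ⟨g1, hg1, hg11⟩ := hG 1 μ
      have hg2l : g2.left = m := by rw [← hsmul1 g2, hg21]
      have hg1l : g1.left = μ := by rw [← hsmul1 g1, hg11]
      have hg2H : g2 ∈ H := (hmem g2).2 ⟨hg2, by rw [hg2l]; exact hm⟩
      have hg1H : g1 ∈ H := (hmem g1).2 ⟨hg1, by rw [hg1l]; exact hμ⟩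
      have hhH : g1 * g2⁻¹ ∈ H := H.mul_mem hg1H (H.inv_mem hg2H)
      refine ⟨g1 * g2⁻¹, (hmem _).1 hhH, ?_⟩
      have : g2⁻¹ • m = (1 : N) := by rw [← hg21, inv_smul_smul]
      rw [mul_smul, this, hg11]
    refine ⟨hact, hright, htrans, ?_⟩
    intro hreg m hm μ hμ
    obtain ⟨h, hh1, hh2⟩ := htrans m hm μ hμ
    refine ⟨h, ⟨hh1, hh2⟩, ?_⟩
    rintro y ⟨⟨hy1, _⟩, hy2⟩
    exact (hreg m μ).unique ⟨hy1, hy2⟩ ⟨hh1.1, hh2⟩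
  · intro hreg H hHG hHact hHreg
    ext g
    simp only [Set.mem_setOf_eq, SetLike.mem_coe]
    constructor
    · intro hgH
      refine ⟨hHG hgH, ?_⟩
      have := hHact g hgH 1 M.one_mem
      rwa [hsmul1] at this
    · rintro ⟨hgG, hgl⟩
      obtain ⟨h, ⟨hhH, hh1⟩, _⟩ := hHreg 1 M.one_mem g.left hgl
      have : g = h := (hreg 1 g.left).unique ⟨hgG, hsmul1 g⟩ ⟨hHG hhH, hh1⟩
      rw [this]; exact hhH
end

section
/- Let N be a finite group, G a transitive subgroup of Hol(N), and M a normal subgroup of N. The action of G on N induces a well-defined action of G on the quotient N/M if and only if M is a G-invariant subgroup of N. In that case M is G-admissible, and there is a normal subgroup K of G (namely the core in G of the stabiliser M_* of the trivial coset) such that G/K embeds as a transitive subgroup of Hol(N/M). -/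
/-- Proposition 2.6: for a normal subgroup `M` of `N`, the action of a transitive
subgroup `G ≤ Hol N` on `N` induces a well-defined action on `N/M` if and only if `M`
is `G`-invariant.  In that case `M` is `G`-admissible, and there is a normal subgroup
`K` of `G` such that `G/K` embeds as a transitive subgroup of `Hol (N/M)`
(expressed below via a homomorphism `φ : G →* Hol (N/M)` with kernel `K` and
transitive image). -/
theorem stmt_2 {N : Type*} [Group N] [Finite N] (G : Subgroup (Hol N))
    (hG : ∀ η μ : N, ∃ g ∈ G, g • η = μ) (M : Subgroup N) [hM : M.Normal] :
    ((∀ g ∈ G, ∀ n n' : N, n⁻¹ * n' ∈ M → (g • n)⁻¹ * (g • n') ∈ M) ↔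
      (∀ g ∈ G, ∀ m ∈ M, g.right m ∈ M)) ∧
    ((∀ g ∈ G, ∀ m ∈ M, g.right m ∈ M) →
      ((∃ H : Subgroup (Hol N), (H : Set (Hol N)) = {g | g ∈ G ∧ g.left ∈ M}) ∧
       ∃ K : Subgroup G, K.Normal ∧
         ∃ φ : G →* Hol (N ⧸ M), φ.ker = K ∧
           ∀ η μ : N ⧸ M, ∃ g : G, φ g • η = μ)) := by
  have key : (∀ g ∈ G, ∀ n n' : N, n⁻¹ * n' ∈ M → (g • n)⁻¹ * (g • n') ∈ M) ↔
      (∀ g ∈ G, ∀ m ∈ M, g.right m ∈ M) := by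
    constructor
    · intro h g hg m hm
      have := h g hg 1 m (by simpa using hm)
      simpa [holSmul_def, mul_assoc] using this
    · intro hinv g hg n n' h
      have e : (g • n)⁻¹ * (g • n') = g.right (n⁻¹ * n') := by
        simp [holSmul_def, mul_assoc]
      rw [e]
      exact hinv g hg _ h
  refine ⟨key, ?_⟩
  intro hinv
  have hinv' : ∀ g ∈ G, ∀ m ∈ M, g.right⁻¹ m ∈ M := by
    intro g hg m hm
    have := hinv g⁻¹ (inv_mem hg) m hm
    simpa using this
  constructor
  · refine ⟨{ carrier := {g | g ∈ G ∧ g.left ∈ M}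
              one_mem' := ⟨one_mem G, by simp [one_mem]⟩
              mul_mem' := ?_
              inv_mem' := ?_ }, rfl⟩
    · rintro a b ⟨haG, haM⟩ ⟨hbG, hbM⟩
      exact ⟨mul_mem haG hbG, by
        rw [SemidirectProduct.mul_left]
        exact mul_mem haM (hinv a haG _ hbM)⟩
    · rintro a ⟨haG, haM⟩
      refine ⟨inv_mem haG, ?_⟩
      rw [SemidirectProduct.inv_left]
      exact hinv' a haG _ (inv_mem haM)
  · have hmap : ∀ g : G, M.map ((g : Hol N).right : N →* N) = M := by
      intro g
      apply le_antisymm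
      · rintro _ ⟨m, hm, rfl⟩
        exact hinv g g.2 m hm
      · intro m hm
        exact ⟨(g : Hol N).right⁻¹ m, hinv' g g.2 m hm, by simp⟩
    let ψ : G → Hol (N ⧸ M) := fun g =>
      ⟨QuotientGroup.mk (g : Hol N).left,
        QuotientGroup.congr M M ((g : Hol N).right : N ≃* N) (hmap g)⟩
    have hψ_smul : ∀ (g : G) (n : N), ψ g • (QuotientGroup.mk n : N ⧸ M) =
        QuotientGroup.mk ((g : Hol N) • n) := by
      intro g n
      rfl
    have hψ_mul : ∀ g h : G, ψ (g * h) = ψ g * ψ h := by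
      intro g h
      refine SemidirectProduct.ext ?_ ?_
      · show QuotientGroup.mk ((g : Hol N) * h).left = _
        rw [SemidirectProduct.mul_left]
        rfl
      · refine MulEquiv.ext fun x => ?_
        induction x using QuotientGroup.induction_on with
        | H n =>
          show QuotientGroup.mk (((g : Hol N) * h).right n) = _
          rw [SemidirectProduct.mul_right]
          rfl
    let φ : G →* Hol (N ⧸ M) :=
      { toFun := ψ
        map_one' := by
          refine SemidirectProduct.ext rfl (MulEquiv.ext fun x => ?_)
          induction x using QuotientGroup.induction_on with
          | H n => rfl
        map_mul' := hψ_mul }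
    refine ⟨φ.ker, MonoidHom.normal_ker φ, φ, rfl, ?_⟩
    intro η μ
    induction η using QuotientGroup.induction_on with
    | H n =>
      induction μ using QuotientGroup.induction_on with
      | H m =>
        obtain ⟨g, hg, hgm⟩ := hG n m
        refine ⟨⟨g, hg⟩, ?_⟩
        rw [show φ ⟨g, hg⟩ = ψ ⟨g, hg⟩ from rfl, hψ_smul, hgm]
end

section
/- Let V = F_p^n and G ≤ Aff(V). Suppose G decomposes as an (internal) direct product G = A × B, and V = U ⊕ W as F_p[G]-modules for the linear action, where B acts trivially on U and A acts trivially on W. Suppose further that U is a fixed-point-free F_p[A]-module (if u ∈ U satisfies θ_α(u) = u for all α = (v_α, θ_α) ∈ A then u = 0) and W is a fixed-point-free F_p[B]-module. Then α · 0_V ∈ U for all α ∈ A and β · 0_V ∈ W for all β ∈ B; consequently G is contained in Aff(U) × Aff(W) ≤ Aff(V). -/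
/-- The vector space `𝔽_p^n`. -/
abbrev V (p n : ℕ) : Type := Fin n → ZMod p

/-- The affine group `Aff(V) = V ⋊ GL(V)` of `V = 𝔽_p^n`, realised as the group of
affine self-equivalences of `V`; the pair `(v, A)` corresponds to `w ↦ A w + v` and
acts on `V` by evaluation. -/
abbrev Aff (p n : ℕ) : Type := V p n ≃ᵃ[ZMod p] V p n

/-- Proposition 5.3: suppose `G ≤ Aff(V)` decomposes as an internal direct product
`G = A × B`, and `V = U ⊕ W` as `𝔽_p[G]`-modules for the linear action, where `B`
acts trivially on `U` and `A` acts trivially on `W`.  If `U` is a fixed-point-free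
`𝔽_p[A]`-module and `W` is a fixed-point-free `𝔽_p[B]`-module, then `a • 0_V ∈ U` for
all `a ∈ A` and `b • 0_V ∈ W` for all `b ∈ B` (so that `G ≤ Aff(U) × Aff(W)`). -/
theorem stmt_11 (p n : ℕ) (hp : p.Prime) (G A B : Subgroup (Aff p n))
    (hA : A ≤ G) (hB : B ≤ G)
    (hcomm : ∀ a ∈ A, ∀ b ∈ B, a * b = b * a)
    (hAB_inf : A ⊓ B = ⊥) (hAB_sup : A ⊔ B = G)
    (U W : Submodule (ZMod p) (V p n))
    (hUW_inf : U ⊓ W = ⊥) (hUW_sup : U ⊔ W = ⊤)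
    (hUinv : ∀ g ∈ G, ∀ u ∈ U, g.linear u ∈ U)
    (hWinv : ∀ g ∈ G, ∀ w ∈ W, g.linear w ∈ W)
    (hBtrivU : ∀ b ∈ B, ∀ u ∈ U, b.linear u = u)
    (hAtrivW : ∀ a ∈ A, ∀ w ∈ W, a.linear w = w)
    (hUfpf : ∀ u ∈ U, (∀ a ∈ A, a.linear u = u) → u = 0)
    (hWfpf : ∀ w ∈ W, (∀ b ∈ B, b.linear w = w) → w = 0) :
    (∀ a ∈ A, a 0 ∈ U) ∧ (∀ b ∈ B, b 0 ∈ W) := by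
  -- affine expansion: f x = f.linear x + f 0
  have key : ∀ (f : Aff p n) (x : V p n), f x = f.linear x + f 0 := by
    intro f x
    have h := f.map_vadd (0 : V p n) x
    simpa [vadd_eq_add, add_comm] using h
  -- decomposition
  have hdec : ∀ x : V p n, ∃ u ∈ U, ∃ w ∈ W, x = u + w := by
    intro x
    have hx : x ∈ U ⊔ W := by rw [hUW_sup]; trivial
    rcases Submodule.mem_sup.mp hx with ⟨u, hu, w, hw, h⟩
    exact ⟨u, hu, w, hw, h.symm⟩
  -- the core computation
  have core : ∀ a ∈ A, ∀ b ∈ B, ∀ ua ∈ U, ∀ wa ∈ W, ∀ ub ∈ U, ∀ wb ∈ W,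
      a 0 = ua + wa → b 0 = ub + wb →
      a.linear ub = ub ∧ b.linear wa = wa := by
    intro a ha b hb ua hua wa hwa ub hub wb hwb hda hdb
    have hmul := hcomm a ha b hb
    have heval : a (b 0) = b (a 0) := by
      have := congrArg (fun f : Aff p n => f 0) hmul
      simpa using this
    rw [key a (b 0), key b (a 0), hda, hdb, map_add, map_add] at heval
    rw [hAtrivW a ha wb hwb, hBtrivU b hb ua hua] at heval
    -- heval : a.linear ub + wb + (ua + wa) = ua + b.linear wa + (ub + wb)
    set d := a.linear ub - ub with hd
    have hdW : d = b.linear wa - wa := by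
      have : a.linear ub + wb + (ua + wa) = ua + b.linear wa + (ub + wb) := heval
      rw [hd]
      linear_combination this
    have hdU : d ∈ U := by
      exact sub_mem (hUinv a (hA ha) ub hub) hub
    have hdW' : d ∈ W := by
      rw [hdW]; exact sub_mem (hWinv b (hB hb) wa hwa) hwa
    have hd0 : d = 0 := by
      have : d ∈ U ⊓ W := ⟨hdU, hdW'⟩
      rw [hUW_inf] at this
      simpa using this
    have hd0' : b.linear wa - wa = 0 := by rw [← hdW, hd0]
    rw [hd] at hd0
    exact ⟨sub_eq_zero.mp hd0, sub_eq_zero.mp hd0'⟩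
  constructor
  · intro a ha
    rcases hdec (a 0) with ⟨ua, hua, wa, hwa, hda⟩
    have hwa0 : wa = 0 := by
      refine hWfpf wa hwa (fun b hb => ?_)
      rcases hdec (b 0) with ⟨ub, hub, wb, hwb, hdb⟩
      exact (core a ha b hb ua hua wa hwa ub hub wb hwb hda hdb).2
    rw [hda, hwa0, add_zero]; exact hua
  · intro b hb
    rcases hdec (b 0) with ⟨ub, hub, wb, hwb, hdb⟩
    have hub0 : ub = 0 := by
      refine hUfpf ub hub (fun a ha => ?_)
      rcases hdec (a 0) with ⟨ua, hua, wa, hwa, hda⟩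
      exact (core a ha b hb ua hua wa hwa ub hub wb hwb hda hdb).1
    rw [hdb, hub0, zero_add]; exact hwb
end

section
/- Let V = F_p^n and G ≤ Aff(V). Suppose G decomposes as an (internal) direct product G = A × B, and that as an F_p[G]-module (for the linear action) V decomposes as a tensor product V = U ⊗_{F_p} W, where the linear action of (α, β) ∈ A × B on U ⊗ W is (action of α on U) ⊗ (action of β on W). Suppose further that A contains an element α = (0_V, θ_α) fixing 0_V such that the endomorphism θ_α − id of U is invertible. Then β · 0_V = 0_V for every β ∈ B. -/
open TensorProduct in
/-- Proposition 5.4: suppose `G ≤ Aff(V)` decomposes as an internal direct product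
`G = A × B` and, as an `𝔽_p[G]`-module for the linear action, `V` decomposes as a
tensor product `V = U ⊗ W`, where `(a, b)` acts as `(action of a on U) ⊗ (action of b
on W)`.  If `A` contains an element `a₀` fixing `0_V` whose action on `U` minus the
identity is invertible, then `b • 0_V = 0_V` for every `b ∈ B`. -/
theorem stmt_12 (p n : ℕ) (hp : p.Prime) (G A B : Subgroup (Aff p n))
    (hA : A ≤ G) (hB : B ≤ G)
    (hcomm : ∀ a ∈ A, ∀ b ∈ B, a * b = b * a)
    (hAB_inf : A ⊓ B = ⊥) (hAB_sup : A ⊔ B = G)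
    (U W : Type*) [AddCommGroup U] [Module (ZMod p) U]
    [AddCommGroup W] [Module (ZMod p) W]
    (ρA : A →* (U ≃ₗ[ZMod p] U)) (ρB : B →* (W ≃ₗ[ZMod p] W))
    (ι : (U ⊗[ZMod p] W) ≃ₗ[ZMod p] V p n)
    (hιA : ∀ (a : A) (u : U) (w : W),
      (a : Aff p n).linear (ι (u ⊗ₜ[ZMod p] w)) = ι (ρA a u ⊗ₜ[ZMod p] w))
    (hιB : ∀ (b : B) (u : U) (w : W),
      (b : Aff p n).linear (ι (u ⊗ₜ[ZMod p] w)) = ι (u ⊗ₜ[ZMod p] ρB b w))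
    (a₀ : A) (ha₀ : (a₀ : Aff p n) 0 = 0)
    (ha₀inv : Function.Bijective fun u : U => ρA a₀ u - u) :
    ∀ b : B, (b : Aff p n) 0 = 0 := by
  haveI : Fact p.Prime := ⟨hp⟩
  intro b
  -- a₀ acts linearly since it fixes 0
  have hlin : ∀ x : V p n, (a₀ : Aff p n) x = (a₀ : Aff p n).linear x := by
    intro x
    have := (a₀ : Aff p n).toAffineMap.map_vadd (0 : V p n) x
    simpa [ha₀] using this
  -- from commutativity: a₀.linear (b 0) = b 0
  have hc : (a₀ : Aff p n) * (b : Aff p n) = (b : Aff p n) * (a₀ : Aff p n) :=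
    hcomm _ a₀.2 _ b.2
  have hfix : (a₀ : Aff p n).linear ((b : Aff p n) 0) = (b : Aff p n) 0 := by
    have h1 : ((a₀ : Aff p n) * (b : Aff p n)) 0 = ((b : Aff p n) * (a₀ : Aff p n)) 0 := by
      rw [hc]
    have h2 : (a₀ : Aff p n) ((b : Aff p n) 0) = (b : Aff p n) ((a₀ : Aff p n) 0) := h1
    rw [ha₀] at h2
    rw [← hlin, h2]
  -- transport to the tensor product
  set f : U →ₗ[ZMod p] U := (ρA a₀ : U ≃ₗ[ZMod p] U).toLinearMap - LinearMap.id with hf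
  have hkey : ∀ t : U ⊗[ZMod p] W,
      (a₀ : Aff p n).linear (ι t) = ι (LinearMap.rTensor W (ρA a₀ : U ≃ₗ[ZMod p] U).toLinearMap t) := by
    intro t
    induction t using TensorProduct.induction_on with
    | zero => simp
    | tmul u w => simpa using hιA a₀ u w
    | add x y hx hy => simp [map_add, hx, hy]
  set t : U ⊗[ZMod p] W := ι.symm ((b : Aff p n) 0) with ht
  have htt : (b : Aff p n) 0 = ι t := by simp [ht]
  have h3 : ι (LinearMap.rTensor W (ρA a₀ : U ≃ₗ[ZMod p] U).toLinearMap t) = ι t := by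
    rw [← hkey, ← htt, hfix]
  have h4 : LinearMap.rTensor W (ρA a₀ : U ≃ₗ[ZMod p] U).toLinearMap t = t := ι.injective h3
  have h5 : LinearMap.rTensor W f t = 0 := by
    rw [hf, LinearMap.rTensor_sub, LinearMap.sub_apply, h4, LinearMap.rTensor_id, LinearMap.id_apply, sub_self]
  have hfinj : Function.Injective f := by
    have : (f : U → U) = fun u : U => ρA a₀ u - u := by
      ext u; simp [hf]
    rw [← this] at ha₀inv
    exact ha₀inv.injective
  have hinj : Function.Injective (LinearMap.rTensor W f) :=
    Module.Flat.rTensor_preserves_injective_linearMap f hfinj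
  have ht0 : t = 0 := by
    apply hinj
    simpa using h5
  rw [htt, ht0, map_zero]
end

section
/- Let V = F_p^n and let G ≤ Aff(V) satisfy Hypothesis (*). Let {1} = G_0 ◁ G_1 ◁ ⋯ ◁ G_m = G be any composition series of G. Then for each 1 ≤ i ≤ m: (i) the pair (G_i, V) also satisfies Hypothesis (*); and (ii) the simple group G_i/G_{i−1} has a soluble subgroup of index p^s for some s ≥ 0. -/
/-- The stabiliser of the point `v` in a subgroup `G ≤ Aff(V)`. -/
def affStab {p n : ℕ} (G : Subgroup (Aff p n)) (v : V p n) : Subgroup (Aff p n) where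
  carrier := {g | g ∈ G ∧ g v = v}
  one_mem' := ⟨G.one_mem, rfl⟩
  mul_mem' := by
    rintro a b ⟨haG, hav⟩ ⟨hbG, hbv⟩
    refine ⟨G.mul_mem haG hbG, ?_⟩
    show a (b v) = v
    rw [hbv, hav]
  inv_mem' := by
    rintro a ⟨haG, hav⟩
    refine ⟨G.inv_mem haG, ?_⟩
    have h1 : (a⁻¹ * a) v = a⁻¹ (a v) := rfl
    rw [inv_mul_cancel] at h1
    rw [hav] at h1
    exact h1.symm

/-- Hypothesis (*): for each `v ∈ V`, the stabiliser of `v` in `G` is a soluble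
subgroup of `p`-power index in `G`. -/
def HypStar (p n : ℕ) (G : Subgroup (Aff p n)) : Prop :=
  ∀ v : V p n, IsSolvable (affStab G v) ∧ ∃ s : ℕ, (affStab G v).relIndex G = p ^ s

namespace Subgroup

variable {G : Type*} [Group G]

theorem relIndex_eq_relIndex_sup_of_normal (K N : Subgroup G) [N.Normal] [N.FiniteIndex] :
    K.relIndex N = K.relIndex (N ⊔ K) := by
  have hNK : N.relIndex K ≠ 0 :=
    ne_zero_of_dvd_ne_zero FiniteIndex.index_ne_zero (relIndex_dvd_index_of_normal N K)
  -- `(K ⊓ N).relIndex (N ⊔ K)` computed through `N` and through `K`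
  have hN : K.relIndex N * N.relIndex K = (K ⊓ N).relIndex (N ⊔ K) := by
    rw [← inf_relIndex_right K N, ← relIndex_sup_left K N,
      relIndex_mul_relIndex _ _ _ inf_le_right le_sup_left]
  have hK : N.relIndex K * K.relIndex (N ⊔ K) = (K ⊓ N).relIndex (N ⊔ K) := by
    rw [← inf_relIndex_right N K, inf_comm N K,
      relIndex_mul_relIndex _ _ _ inf_le_left le_sup_right]
  exact Nat.eq_of_mul_eq_mul_left (Nat.pos_of_ne_zero hNK) (by rw [hK, mul_comm, hN])

theorem relIndex_dvd_index_of_normal_right (K N : Subgroup G) [N.Normal] [N.FiniteIndex] :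
    K.relIndex N ∣ K.index :=
  relIndex_eq_relIndex_sup_of_normal K N ▸ relIndex_dvd_index_of_le le_sup_right

theorem relIndex_dvd_relIndex_of_normal_subgroupOf {H Γ : Subgroup G} (hHΓ : H ≤ Γ)
    [(H.subgroupOf Γ).Normal] [(H.subgroupOf Γ).FiniteIndex] (K : Subgroup G) :
    K.relIndex H ∣ K.relIndex Γ :=
  relIndex_subgroupOf hHΓ ▸ relIndex_dvd_index_of_normal_right (K.subgroupOf Γ) (H.subgroupOf Γ)

theorem isSolvable_map {G' : Type*} [Group G'] (f : G →* G') (K : Subgroup G)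
    [Group.IsSolvable K] :
    Group.IsSolvable (K.map f) :=
  Group.isSolvable_of_surjective (f.subgroupMap_surjective K)

end Subgroup

theorem Nat.exists_eq_pow_of_dvd_prime_pow {p d s : ℕ} (hp : p.Prime) (h : d ∣ p ^ s) :
    ∃ t : ℕ, d = p ^ t :=
  let ⟨t, _, ht⟩ := (Nat.dvd_prime_pow hp).mp h
  ⟨t, ht⟩

instance (p n : ℕ) [NeZero p] : Finite (Aff p n) :=
  Finite.of_injective _ (AffineEquiv.toEquiv_injective (k := ZMod p))

theorem affStab_le {p n : ℕ} (Γ : Subgroup (Aff p n)) (v : V p n) : affStab Γ v ≤ Γ :=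
  fun _ hg => hg.1

theorem affStab_eq_inf {p n : ℕ} {H Γ : Subgroup (Aff p n)} (hHΓ : H ≤ Γ) (v : V p n) :
    affStab H v = H ⊓ affStab Γ v := by
  ext g
  exact ⟨fun ⟨hg, hv⟩ => ⟨hg, hHΓ hg, hv⟩, fun ⟨hg, _, hv⟩ => ⟨hg, hv⟩⟩

theorem HypStar.of_normal {p n : ℕ} (hp : p.Prime) {H Γ : Subgroup (Aff p n)} (hHΓ : H ≤ Γ)
    [(H.subgroupOf Γ).Normal] (hΓ : HypStar p n Γ) : HypStar p n H := by
  have : NeZero p := ⟨hp.ne_zero⟩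
  intro v
  obtain ⟨hsol, s, hs⟩ := hΓ v
  have hstab := affStab_eq_inf hHΓ v
  refine ⟨?_, ?_⟩
  · have : Group.IsSolvable (affStab Γ v) := hsol
    have hle : affStab H v ≤ affStab Γ v := hstab ▸ inf_le_right
    exact Group.isSolvable_of_isSolvable_injective (Subgroup.inclusion_injective hle)
  · refine Nat.exists_eq_pow_of_dvd_prime_pow hp (s := s) ?_
    rw [hstab, Subgroup.inf_relIndex_left, ← hs]
    exact Subgroup.relIndex_dvd_relIndex_of_normal_subgroupOf hHΓ _

theorem HypStar.exists_isSolvable_index_eq_pow_quotient {p n : ℕ} (hp : p.Prime)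
    {Γ : Subgroup (Aff p n)} (hΓ : HypStar p n Γ) (N : Subgroup Γ) [N.Normal] :
    ∃ S : Subgroup (Γ ⧸ N), Group.IsSolvable S ∧ ∃ s : ℕ, S.index = p ^ s := by
  obtain ⟨hsol, s, hs⟩ := hΓ 0
  set K : Subgroup Γ := (affStab Γ 0).subgroupOf Γ
  have : Group.IsSolvable (affStab Γ 0) := hsol
  have : Group.IsSolvable K := Group.isSolvable_of_isSolvable_injective
    (f := (Subgroup.subgroupOfEquivOfLe (affStab_le Γ 0)).toMonoidHom) (MulEquiv.injective _)
  refine ⟨K.map (QuotientGroup.mk' N), K.isSolvable_map _,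
    Nat.exists_eq_pow_of_dvd_prime_pow hp (s := s) ?_⟩
  exact hs ▸ K.index_map_dvd (QuotientGroup.mk'_surjective N)

theorem stmt_14_general (p n : ℕ) (hp : p.Prime) (G : Subgroup (Aff p n))
    (hG : HypStar p n G)
    (m : ℕ) (c : Fin (m + 1) → Subgroup (Aff p n))
    (hcm : c (Fin.last m) = G)
    (hle : ∀ i : Fin m, c i.castSucc ≤ c i.succ)
    (hnorm : ∀ i : Fin m, ((c i.castSucc).subgroupOf (c i.succ)).Normal) :
    ∀ i : Fin m,
      HypStar p n (c i.succ) ∧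
      (letI := hnorm i
       ∃ S : Subgroup (c i.succ ⧸ (c i.castSucc).subgroupOf (c i.succ)),
         IsSolvable S ∧ ∃ s : ℕ, S.index = p ^ s) := by
  have hseries : ∀ j, HypStar p n (c j) :=
    Fin.reverseInduction (hcm ▸ hG) fun i hi => have := hnorm i; hi.of_normal hp (hle i)
  intro i
  have := hnorm i
  exact ⟨hseries i.succ, (hseries i.succ).exists_isSolvable_index_eq_pow_quotient hp _⟩

/-- Lemma 6.3: let `G ≤ Aff(V)` satisfy Hypothesis (*) and let
`{1} = G₀ ◁ G₁ ◁ ⋯ ◁ G_m = G` be any composition series of `G`.  Then for each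
`1 ≤ i ≤ m`: (i) the pair `(G_i, V)` also satisfies Hypothesis (*); and (ii) the
simple group `G_i/G_{i-1}` has a soluble subgroup of index `p^s` for some `s ≥ 0`. -/
theorem stmt_14 (p n : ℕ) (hp : p.Prime) (G : Subgroup (Aff p n))
    (hG : HypStar p n G)
    (m : ℕ) (c : Fin (m + 1) → Subgroup (Aff p n))
    (hc0 : c 0 = ⊥) (hcm : c (Fin.last m) = G)
    (hle : ∀ i : Fin m, c i.castSucc ≤ c i.succ)
    (hnorm : ∀ i : Fin m, ((c i.castSucc).subgroupOf (c i.succ)).Normal)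
    (hsimple : ∀ i : Fin m,
      letI := hnorm i
      IsSimpleGroup (c i.succ ⧸ (c i.castSucc).subgroupOf (c i.succ))) :
    ∀ i : Fin m,
      HypStar p n (c i.succ) ∧
      (letI := hnorm i
       ∃ S : Subgroup (c i.succ ⧸ (c i.castSucc).subgroupOf (c i.succ)),
         IsSolvable S ∧ ∃ s : ℕ, S.index = p ^ s) :=
  stmt_14_general p n hp G hG m c hcm hle hnorm
end
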